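/- arXiv:2304.06862 — 2 statements merged into one kernel-verified Lean document; each statement's English description precedes it below -/
import Mathlib

section
/- For any word S of length n, the length of a longest square subsequence of S equals twice the maximum over all cut positions k (1 ≤ k < n) of the length of a longest common subsequence of S[0..k) and S[k..n). -/
/-! A square subsequence `X ++ X` of `S` is exactly a common subsequence `X` of the two sides of
some cut of `S`, and for nonempty `X` that cut is a proper one, `1 ≤ k < n`. Hence the square
lengths are the doubles of the cut-LCS lengths, up to the length `0` of the empty square,
which is harmless because `sSup ∅ = 0` in `ℕ`. -/

namespace List

variable {α : Type*} {l₁ l₂ S : List α}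

theorem append_sublist_of_sublist_take_of_sublist_drop {k : ℕ} (h₁ : l₁ <+ S.take k)
    (h₂ : l₂ <+ S.drop k) : l₁ ++ l₂ <+ S := by
  simpa only [take_append_drop] using h₁.append h₂

theorem exists_proper_cut_of_append_sublist (h₁ : l₁ ≠ []) (h₂ : l₂ ≠ [])
    (h : l₁ ++ l₂ <+ S) :
    ∃ k, 1 ≤ k ∧ k < S.length ∧ l₁ <+ S.take k ∧ l₂ <+ S.drop k := by
  obtain ⟨r₁, r₂, rfl, hr₁, hr₂⟩ := append_sublist_iff.mp h
  have hr₁_pos : 0 < r₁.length := length_pos_iff.mpr fun h => h₁ (eq_nil_of_sublist_nil (h ▸ hr₁))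
  have hr₂_pos : 0 < r₂.length := length_pos_iff.mpr fun h => h₂ (eq_nil_of_sublist_nil (h ▸ hr₂))
  refine ⟨r₁.length, hr₁_pos, ?_, ?_, ?_⟩
  · rw [length_append]; omega
  · rwa [take_left]
  · rwa [drop_left]

end List

/-- The length of a longest square subsequence of S equals twice the maximum,
over all cut positions 1 ≤ k < n, of the length of a longest common
subsequence of S[0..k) and S[k..n). -/
theorem longest_square_subsequence_eq_cuts {α : Type*} (S : List α) :
    sSup {m : ℕ | ∃ X : List α, (X ++ X).Sublist S ∧ m = (X ++ X).length} =
      2 * sSup {m : ℕ | ∃ k : ℕ, 1 ≤ k ∧ k < S.length ∧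
        ∃ X : List α, X.Sublist (S.take k) ∧ X.Sublist (S.drop k) ∧
          m = X.length} := by
  set squares := {m : ℕ | ∃ X : List α, (X ++ X).Sublist S ∧ m = (X ++ X).length}
  set cuts := {m : ℕ | ∃ k : ℕ, 1 ≤ k ∧ k < S.length ∧
      ∃ X : List α, X.Sublist (S.take k) ∧ X.Sublist (S.drop k) ∧ m = X.length}
  have squares_bdd : BddAbove squares := ⟨S.length, by rintro _ ⟨X, hX, rfl⟩; exact hX.length_le⟩
  have cuts_bdd : BddAbove cuts := ⟨S.length, by
    rintro _ ⟨k, -, -, X, -, hX, rfl⟩; exact (hX.trans (S.drop_sublist k)).length_le⟩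
  apply le_antisymm
  · refine csSup_le' ?_
    rintro _ ⟨X, hXX, rfl⟩
    rcases eq_or_ne X [] with rfl | hX
    · simp
    obtain ⟨k, hk₁, hk₂, htake, hdrop⟩ := List.exists_proper_cut_of_append_sublist hX hX hXX
    have := le_csSup cuts_bdd ⟨k, hk₁, hk₂, X, htake, hdrop, rfl⟩
    rw [List.length_append]
    omega
  · rcases cuts.eq_empty_or_nonempty with h | h
    · simp [h]
    obtain ⟨k, -, -, X, htake, hdrop, hm⟩ := Nat.sSup_mem h cuts_bdd
    rw [hm, two_mul, ← List.length_append]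
    exact le_csSup squares_bdd
      ⟨X, List.append_sublist_of_sublist_take_of_sublist_drop htake hdrop, rfl⟩
end

section
/- For any word S of length n, the length of a longest cubic subsequence of S equals three times the maximum over all pairs of cut positions 1 ≤ j < k < n of the length of a longest common subsequence of the three words S[0..j), S[j..k), and S[k..n). -/
/-!
An embedding of `X ++ X ++ X` into `S` is the same as two cut positions `j ≤ k` with one copy
of `X` embedded in each of `S[0..j)`, `S[j..k)`, `S[k..n)`; when `X ≠ []` each piece is nonempty,
so `1 ≤ j < k < n`. The cube lengths are therefore `0` together with three times the
common-subsequence lengths, and multiplication by `3` commutes with the supremum.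
-/

theorem Monotone.nat_sSup_insert_zero_image {f : ℕ → ℕ} (hf : Monotone f) (hf0 : f 0 = 0)
    {s : Set ℕ} (hs : BddAbove s) : sSup (insert 0 (f '' s)) = f (sSup s) := by
  rw [csSup_insert' (hf.map_bddAbove hs), Nat.zero_max]
  rcases s.eq_empty_or_nonempty with rfl | hne
  · simp [hf0]
  · exact (hf.map_isGreatest ⟨Nat.sSup_mem hne hs, fun _ ha => le_csSup hs ha⟩).csSup_eq

namespace List

variable {α : Type*}

theorem append_append_sublist_iff {X Y Z S : List α} :
    (X ++ Y ++ Z).Sublist S ↔ ∃ j k, j ≤ k ∧ X.Sublist (S.take j) ∧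
      Y.Sublist ((S.drop j).take (k - j)) ∧ Z.Sublist (S.drop k) := by
  constructor
  · rw [append_sublist_iff]
    rintro ⟨AB, C, rfl, hXY, hZ⟩
    obtain ⟨A, B, rfl, hX, hY⟩ := append_sublist_iff.mp hXY
    refine ⟨A.length, A.length + B.length, by omega, ?_, ?_, ?_⟩
    · simpa using hX
    · simpa using hY
    · simpa using hZ
  · rintro ⟨j, k, hjk, hX, hY, hZ⟩
    have hS : S = S.take j ++ ((S.drop j).take (k - j) ++ S.drop k) := by
      obtain ⟨d, rfl⟩ := Nat.exists_eq_add_of_le hjk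
      rw [Nat.add_sub_cancel_left, ← drop_drop, take_append_drop, take_append_drop]
    rw [hS, append_assoc]
    exact hX.append (hY.append hZ)

theorem append_append_sublist_iff_of_ne_nil {X : List α} (hX : X ≠ []) {S : List α} :
    (X ++ X ++ X).Sublist S ↔ ∃ j k, 1 ≤ j ∧ j < k ∧ k < S.length ∧ X.Sublist (S.take j) ∧
      X.Sublist ((S.drop j).take (k - j)) ∧ X.Sublist (S.drop k) := by
  have ne_nil {l : List α} (h : X.Sublist l) : l ≠ [] := fun hl => hX (sublist_nil.mp (hl ▸ h))
  rw [append_append_sublist_iff]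
  refine ⟨fun ⟨j, k, _, h₁, h₂, h₃⟩ => ⟨j, k, ?_, ?_, ?_, h₁, h₂, h₃⟩,
    fun ⟨j, k, _, hjk, _, h⟩ => ⟨j, k, hjk.le, h⟩⟩
  · have := ne_nil h₁
    rw [Ne, take_eq_nil_iff] at this
    omega
  · have := ne_nil h₂
    rw [Ne, take_eq_nil_iff] at this
    omega
  · have := ne_nil h₃
    rw [Ne, drop_eq_nil_iff] at this
    omega

theorem length_append_append_self (X : List α) : (X ++ X ++ X).length = 3 * X.length := by
  simp only [length_append]
  ring

end List

/-- The length of a longest cubic subsequence of S equals three times the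
maximum over pairs of cuts 1 ≤ j < k < n of the length of a longest common
subsequence of S[0..j), S[j..k) and S[k..n). -/
theorem longest_cubic_subsequence_eq_cuts {α : Type*} (S : List α) :
    sSup {m : ℕ | ∃ X : List α, (X ++ X ++ X).Sublist S ∧ m = (X ++ X ++ X).length} =
      3 * sSup {m : ℕ | ∃ j k : ℕ, 1 ≤ j ∧ j < k ∧ k < S.length ∧
        ∃ X : List α, X.Sublist (S.take j) ∧
          X.Sublist ((S.drop j).take (k - j)) ∧ X.Sublist (S.drop k) ∧
          m = X.length} := by
  set R := {m : ℕ | ∃ j k : ℕ, 1 ≤ j ∧ j < k ∧ k < S.length ∧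
        ∃ X : List α, X.Sublist (S.take j) ∧
          X.Sublist ((S.drop j).take (k - j)) ∧ X.Sublist (S.drop k) ∧
          m = X.length}
  have hR : BddAbove R := ⟨S.length, by
    rintro _ ⟨j, k, -, -, -, X, -, -, hX, rfl⟩
    exact hX.length_le.trans (by simp)⟩
  have hcubes : {m : ℕ | ∃ X : List α, (X ++ X ++ X).Sublist S ∧ m = (X ++ X ++ X).length} =
      insert 0 ((3 * ·) '' R) := by
    ext m
    constructor
    · rintro ⟨X, hsub, rfl⟩
      rcases eq_or_ne X [] with rfl | hX
      · exact Or.inl rfl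
      obtain ⟨j, k, hj, hjk, hk, h⟩ := (List.append_append_sublist_iff_of_ne_nil hX).mp hsub
      exact Or.inr ⟨X.length, ⟨j, k, hj, hjk, hk, X, h.1, h.2.1, h.2.2, rfl⟩,
        (List.length_append_append_self X).symm⟩
    · rintro (rfl | ⟨_, ⟨j, k, -, hjk, -, X, h₁, h₂, h₃, rfl⟩, rfl⟩)
      · exact ⟨[], List.nil_sublist S, rfl⟩
      · exact ⟨X, List.append_append_sublist_iff.mpr ⟨j, k, hjk.le, h₁, h₂, h₃⟩,
          (List.length_append_append_self X).symm⟩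
  rw [hcubes, Monotone.nat_sSup_insert_zero_image (fun _ _ h => Nat.mul_le_mul_left 3 h) rfl hR]
end
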